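/- For every positive integer n and every x in a neighborhood of 0 where all g(k) = Σ_{r=0}^{k} binom(2k-r,r)·x^r for k ≤ n are nonzero, the determinant of the n×n matrix with entries C(i+j-2) + x·C(i+j-1) (1 ≤ i,j ≤ n) equals g(n) = Σ_{r=0}^{n} binom(2n-r, r)·x^r. -/

import Mathlib

/-- `Ffun k i x` is the polynomial `F(k,i)` evaluated at the real number `x`:
`F(k,i) = (1/(i(2i-1)))·binom(2i, i-k)·Σ_{r=0}^{k} (1/(2k-r))·binom(2k-r, r)·
  (r·i + 2i·k² - i·k - 2r·k² + 2k³ - k²)·x^r`,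
with the convention `binom(2i, i-k) = 0` for `k > i`. -/
noncomputable def Ffun (k i : ℕ) (x : ℝ) : ℝ :=
  (1 / ((i : ℝ) * (2 * (i : ℝ) - 1))) *
    (if k ≤ i then ((2 * i).choose (i - k) : ℝ) else 0) *
    ∑ r ∈ Finset.range (k + 1),
      (1 / ((2 * k - r : ℕ) : ℝ)) * (((2 * k - r).choose r : ℝ)) *
        ((r : ℝ) * i + 2 * i * (k : ℝ) ^ 2 - (i : ℝ) * k - 2 * r * (k : ℝ) ^ 2
          + 2 * (k : ℝ) ^ 3 - (k : ℝ) ^ 2) * x ^ r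

/-- `gfun k x = Σ_{r=0}^{k} binom(2k-r, r)·x^r`. -/
noncomputable def gfun (k : ℕ) (x : ℝ) : ℝ :=
  ∑ r ∈ Finset.range (k + 1), ((2 * k - r).choose r : ℝ) * x ^ r


namespace DetAux

noncomputable section

/-- binomial coefficient with integer lower index, zero for negative. -/
def ch (N : ℕ) (j : ℤ) : ℤ := if 0 ≤ j then (N.choose j.toNat : ℤ) else 0

lemma ch_neg {N : ℕ} {j : ℤ} (h : j < 0) : ch N j = 0 := by
  simp [ch, not_le.2 h]

lemma ch_pascal (N : ℕ) (j : ℤ) : ch (N + 1) j = ch N j + ch N (j - 1) := by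
  rcases lt_trichotomy j 0 with h | h | h
  · rw [ch_neg h, ch_neg h, ch_neg (by omega), add_zero]
  · subst h; simp [ch]
  · obtain ⟨t, rfl⟩ : ∃ t : ℕ, j = (t : ℤ) + 1 := ⟨(j - 1).toNat, by omega⟩
    have h1 : ((t : ℤ) + 1).toNat = t + 1 := by omega
    have h2 : ((t : ℤ) + 1 - 1).toNat = t := by omega
    simp only [ch, if_pos (by omega : (0:ℤ) ≤ (t:ℤ) + 1), if_pos (by omega : (0:ℤ) ≤ (t:ℤ) + 1 - 1),
      h1, h2, Nat.choose_succ_succ]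
    push_cast; ring

/-- Ballot numbers, antisymmetrized about `-1/2`. -/
def bb (n : ℕ) (k : ℤ) : ℤ := ch (2 * n) ((n : ℤ) - k) - ch (2 * n) ((n : ℤ) - k - 1)

lemma ch_nat (N m : ℕ) : ch N (m : ℤ) = (N.choose m : ℤ) := by simp [ch]

lemma bb_zero {n : ℕ} {k : ℤ} (h : (n : ℤ) < k) : bb n k = 0 := by
  rw [bb, ch_neg (by omega), ch_neg (by omega), sub_self]

lemma bb_diag (n : ℕ) : bb n n = 1 := by
  rw [bb, show ((n : ℤ) - n - 1) = -1 by ring, show ((n : ℤ) - n) = 0 by ring,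
    ch_neg (by omega : (-1 : ℤ) < 0)]
  simp [ch]

lemma bb_neg_one (n : ℕ) : bb n (-1) = -bb n 0 := by
  rcases Nat.eq_zero_or_pos n with rfl | hn
  · norm_num [bb, ch]
  · have h1 : ((n : ℤ) - (-1)) = (n + 1 : ℕ) := by push_cast; ring
    have h2 : ((n : ℤ) - (-1) - 1) = (n : ℕ) := by push_cast; ring
    have h3 : ((n : ℤ) - 0) = (n : ℕ) := by push_cast; ring
    have h4 : ((n : ℤ) - 0 - 1) = (n - 1 : ℕ) := by push_cast [Nat.cast_sub hn]; ring
    rw [bb, bb, h2, h1, h4, h3]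
    rw [ch_nat, ch_nat, ch_nat]
    have : (2 * n).choose (n + 1) = (2 * n).choose (n - 1) := by
      rw [← Nat.choose_symm (by omega : n + 1 ≤ 2 * n)]
      congr 1; omega
    rw [this]; ring

lemma bb_rec (n : ℕ) (k : ℤ) :
    bb (n + 1) k = bb n (k - 1) + 2 * bb n k + bb n (k + 1) := by
  have e : ∀ j : ℤ, ch (2 * (n + 1)) j
      = ch (2 * n) j + 2 * ch (2 * n) (j - 1) + ch (2 * n) (j - 1 - 1) := by
    intro j
    rw [show 2 * (n + 1) = (2 * n + 1) + 1 by ring, ch_pascal, ch_pascal, ch_pascal]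
    ring
  rw [bb, e, e]
  rw [bb, bb, bb]
  push_cast
  ring_nf

lemma bb_cat (s : ℕ) : bb s 0 = (catalan s : ℤ) := by
  rcases Nat.eq_zero_or_pos s with rfl | hs
  · norm_num [bb, ch]
  · have h3 : ((s : ℤ) - 0) = (s : ℕ) := by push_cast; ring
    have h4 : ((s : ℤ) - 0 - 1) = (s - 1 : ℕ) := by push_cast [Nat.cast_sub hs]; ring
    rw [bb, h4, h3]
    rw [ch_nat, ch_nat]
    -- (s+1) * catalan s = (2s).choose s ; (2s).choose s * s = (2s).choose (s-1) * (s+1)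
    have key : ((2 * s).choose s : ℤ) * s = ((2 * s).choose (s - 1)) * (s + 1) := by
      have := Nat.choose_succ_right_eq (2 * s) (s - 1)
      rw [show s - 1 + 1 = s by omega, show 2 * s - (s - 1) = s + 1 by omega] at this
      exact_mod_cast this
    have hc : ((s : ℤ) + 1) * catalan s = (2 * s).choose s := by
      have := succ_mul_catalan_eq_centralBinom s
      rw [Nat.centralBinom] at this
      exact_mod_cast this
    have hne : ((s : ℤ) + 1) ≠ 0 := by positivity
    apply mul_left_cancel₀ hne
    rw [hc]
    nlinarith [key]

end

end DetAux

namespace DetAux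

noncomputable section

open Finset

lemma sum_swap' {N m p : ℕ} (hm : m < N) (hp : p < N) :
    ∑ k ∈ range N, bb (m + 1) k * bb p k = ∑ k ∈ range N, bb m k * bb (p + 1) k := by
  have key : ∀ k : ℕ, bb (m + 1) k * bb p k - bb m k * bb (p + 1) k
      = (fun k : ℕ => bb m ((k : ℤ) - 1) * bb p k - bb p ((k : ℤ) - 1) * bb m k) k
        - (fun k : ℕ => bb m ((k : ℤ) - 1) * bb p k - bb p ((k : ℤ) - 1) * bb m k) (k + 1) := by
    intro k
    simp only [bb_rec]
    push_cast
    ring_nf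
  have tele := Finset.sum_range_sub'
    (fun k : ℕ => bb m ((k : ℤ) - 1) * bb p k - bb p ((k : ℤ) - 1) * bb m k) N
  have h0 : bb m ((0 : ℕ) - 1 : ℤ) * bb p 0 - bb p ((0 : ℕ) - 1 : ℤ) * bb m 0 = 0 := by
    norm_num [bb_neg_one]; ring
  have z1 : bb p ((N : ℕ) : ℤ) = 0 := bb_zero (by exact_mod_cast hp)
  have z2 : bb m ((N : ℕ) : ℤ) = 0 := bb_zero (by exact_mod_cast hm)
  have := Finset.sum_sub_distrib (s := range N)
    (f := fun k : ℕ => bb (m + 1) k * bb p k) (g := fun k : ℕ => bb m k * bb (p + 1) k)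
  have hsum : ∑ k ∈ range N, (bb (m + 1) k * bb p k - bb m k * bb (p + 1) k) = 0 := by
    calc ∑ k ∈ range N, (bb (m + 1) k * bb p k - bb m k * bb (p + 1) k)
        = ∑ k ∈ range N, ((fun k : ℕ => bb m ((k : ℤ) - 1) * bb p k - bb p ((k : ℤ) - 1) * bb m k) k
            - (fun k : ℕ => bb m ((k : ℤ) - 1) * bb p k - bb p ((k : ℤ) - 1) * bb m k) (k + 1)) :=
          Finset.sum_congr rfl fun k _ => key k
      _ = _ := tele
      _ = 0 := by
          push_cast
          rw [bb_neg_one, bb_neg_one, z1, z2]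
          ring
  rw [sum_sub_distrib] at hsum
  linarith [hsum]

lemma moments {m p N : ℕ} (hN : m + p < N) :
    ∑ k ∈ range N, bb m k * bb p k = (catalan (m + p) : ℤ) := by
  induction m generalizing p with
  | zero =>
    rw [Finset.sum_eq_single 0]
    · push_cast
      rw [show bb 0 (0 : ℤ) = 1 from by simpa using bb_diag 0, one_mul, bb_cat]
      norm_num
    · intro k _ hk
      rw [bb_zero (n := 0) (by exact_mod_cast Nat.pos_of_ne_zero hk), zero_mul]
    · intro h; exact absurd (mem_range.2 (by omega)) h
  | succ m ih =>
    rw [sum_swap' (by omega) (by omega), ih (by omega)]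
    norm_cast
    congr 1
    omega

lemma moments' {m p N : ℕ} (hm : m < N) :
    ∑ k ∈ range N, bb m k * bb p k = (catalan (m + p) : ℤ) := by
  rcases le_or_gt N (m + p) with h | h
  · have : ∑ k ∈ range (m + p + 1), bb m k * bb p k = (catalan (m + p) : ℤ) :=
      moments (by omega)
    rw [← this]
    apply Finset.sum_subset (Finset.range_subset_range.2 (by omega))
    intro k _ hk
    simp only [mem_range, not_lt] at hk
    rw [bb_zero (n := m) (by exact_mod_cast (by omega : m < k)), zero_mul]
  · exact moments h


end

end DetAux



namespace DetAux

open Finset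

variable (x : ℝ)

/-- Fibonacci-type polynomials. -/
noncomputable def hpoly (m : ℕ) : ℝ :=
  ∑ r ∈ Finset.range (m + 1), ((m - r).choose r : ℝ) * x ^ r

lemma g_eq_h (k : ℕ) : gfun k x = hpoly x (2 * k) := by
  rw [gfun, hpoly]
  apply Finset.sum_subset (Finset.range_subset_range.2 (by omega))
  intro r _ hr
  simp only [mem_range, not_lt] at hr
  rw [Nat.choose_eq_zero_of_lt (by omega), Nat.cast_zero, zero_mul]

lemma hpoly_rec (m : ℕ) : hpoly x (m + 2) = hpoly x (m + 1) + x * hpoly x m := by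
  have peel : ∀ s : ℕ, hpoly x (s + 1)
      = 1 + ∑ r ∈ range (s + 1), ((s - r).choose (r + 1) : ℝ) * x ^ (r + 1) := by
    intro s
    rw [hpoly, Finset.sum_range_succ']
    simp only [Nat.sub_zero, Nat.choose_zero_right, Nat.cast_one, pow_zero, mul_one]
    rw [add_comm]
    congr 1
    apply Finset.sum_congr rfl
    intro r _
    have : s + 1 - (r + 1) = s - r := by omega
    rw [this]
  rw [peel (m + 1), peel m]
  have hm : x * hpoly x m = ∑ r ∈ range (m + 1), ((m - r).choose r : ℝ) * x ^ (r + 1) := by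
    rw [hpoly, Finset.mul_sum]
    apply Finset.sum_congr rfl
    intro r _
    ring
  rw [hm]
  have expand : ∑ r ∈ range (m + 2), ((m + 1 - r).choose (r + 1) : ℝ) * x ^ (r + 1)
      = ∑ r ∈ range (m + 1), (((m - r).choose (r + 1) : ℝ) + ((m - r).choose r : ℝ))
          * x ^ (r + 1) := by
    rw [Finset.sum_range_succ, show m + 1 - (m + 1) = 0 from by omega,
      Nat.choose_eq_zero_of_lt (by omega), Nat.cast_zero, zero_mul, add_zero]
    apply Finset.sum_congr rfl
    intro r hr
    simp only [mem_range] at hr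
    rw [show m + 1 - r = (m - r) + 1 from by omega, Nat.choose_succ_succ']
    push_cast
    ring
  rw [expand]
  simp only [add_mul]
  rw [Finset.sum_add_distrib]
  ring

end DetAux

namespace DetAux

open Finset

lemma gfun_zero (x : ℝ) : gfun 0 x = 1 := by
  simp [gfun]

lemma gfun_one (x : ℝ) : gfun 1 x = 1 + x := by
  rw [gfun]
  rw [Finset.sum_range_succ, Finset.sum_range_succ, Finset.sum_range_zero]
  norm_num

lemma gfun_rec (k : ℕ) (x : ℝ) :
    gfun (k + 2) x = (1 + 2 * x) * gfun (k + 1) x - x ^ 2 * gfun k x := by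
  have e1 : gfun (k + 2) x = hpoly x (2 * k + 4) := by
    rw [g_eq_h, show 2 * (k + 2) = 2 * k + 4 from by omega]
  have e2 : gfun (k + 1) x = hpoly x (2 * k + 2) := by
    rw [g_eq_h, show 2 * (k + 1) = 2 * k + 2 from by omega]
  have e3 : gfun k x = hpoly x (2 * k) := g_eq_h x k
  have r1 := hpoly_rec x (2 * k + 2)
  have r2 := hpoly_rec x (2 * k + 1)
  have r3 := hpoly_rec x (2 * k)
  rw [e1, e2, e3]
  rw [show (2 * k + 2) + 2 = 2 * k + 4 from by omega] at r1
  rw [show (2 * k + 1) + 2 = 2 * k + 3 from by omega,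
    show (2 * k + 1) + 1 = 2 * k + 2 from by omega] at r2
  rw [show (2 * k) + 2 = 2 * k + 2 from by omega,
    show (2 * k) + 1 = 2 * k + 1 from by omega] at r3
  rw [show (2 * k + 2) + 1 = 2 * k + 3 from by omega] at r1
  linear_combination r1 + r2 - x * r3

end DetAux



namespace DetAux

open Finset

/-- entries of the tridiagonal middle matrix -/
def fA (x : ℝ) (k l : ℕ) : ℝ :=
  if k = l then (if k = 0 then 1 + x else 1 + 2 * x)
  else if k + 1 = l ∨ l + 1 = k then x else 0

/-- entries of the ballot-number triangle -/
noncomputable def fL (i k : ℕ) : ℝ := ((bb i (k : ℤ) : ℤ) : ℝ)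

/-- lower bidiagonal factor of `fA` -/
noncomputable def fLo (x : ℝ) (k l : ℕ) : ℝ :=
  if k = l then 1 else if l + 1 = k then x * gfun l x / gfun (l + 1) x else 0

/-- upper bidiagonal factor of `fA` -/
noncomputable def fU (x : ℝ) (k l : ℕ) : ℝ :=
  if k = l then gfun (k + 1) x / gfun k x else if k + 1 = l then x else 0

lemma tri_sum {n : ℕ} (x : ℝ) (v : ℕ → ℝ) {k : ℕ} (hk : k < n) (hv : v n = 0) :
    ∑ l ∈ range n, fA x k l * v l
      = if k = 0 then (1 + x) * v 0 + x * v 1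
        else x * v (k - 1) + (1 + 2 * x) * v k + x * v (k + 1) := by
  have split : ∀ l, fA x k l * v l
      = (if l = k then (if k = 0 then 1 + x else 1 + 2 * x) * v l else 0)
        + (if l = k + 1 then x * v l else 0)
        + (if l + 1 = k then x * v l else 0) := by
    intro l
    unfold fA
    split_ifs <;> (first | ring1 | (exfalso; omega))
  rw [Finset.sum_congr rfl fun l _ => split l]
  rw [Finset.sum_add_distrib, Finset.sum_add_distrib]
  rw [Finset.sum_ite_eq' (range n) k, Finset.sum_ite_eq' (range n) (k + 1)]
  rw [if_pos (mem_range.2 hk)]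
  have e2 : (if k + 1 ∈ range n then x * v (k + 1) else 0) = x * v (k + 1) := by
    by_cases h : k + 1 < n
    · rw [if_pos (mem_range.2 h)]
    · rw [if_neg (by simp [mem_range]; omega)]
      rw [show k + 1 = n from by omega, hv, mul_zero]
  rw [e2]
  by_cases hk0 : k = 0
  · subst hk0
    rw [Finset.sum_eq_zero fun l _ => by rw [if_neg (by omega)]]
    norm_num
  · have e3 : ∑ l ∈ range n, (if l + 1 = k then x * v l else 0)
        = x * v (k - 1) := by
      rw [Finset.sum_congr rfl (fun l _ => if_congr (by omega : l + 1 = k ↔ l = k - 1) rfl rfl)]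
      rw [Finset.sum_ite_eq' (range n) (k - 1)]
      rw [if_pos (mem_range.2 (by omega))]
    rw [e3]
    simp only [if_neg hk0]
    ring

lemma bb_rec_real (j : ℕ) (k : ℤ) :
    ((bb (j + 1) k : ℤ) : ℝ) = ((bb j (k - 1) : ℤ) : ℝ) + 2 * ((bb j k : ℤ) : ℝ)
      + ((bb j (k + 1) : ℤ) : ℝ) := by
  exact_mod_cast congrArg (fun z : ℤ => (z : ℝ)) (bb_rec j k)

lemma rowA {n : ℕ} (x : ℝ) {k j : ℕ} (hk : k < n) (hj : j < n) :
    ∑ l ∈ range n, fA x k l * fL j l = fL j k + x * fL (j + 1) k := by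
  have hv : fL j n = 0 := by
    unfold fL; rw [bb_zero (by exact_mod_cast hj)]; norm_num
  rw [tri_sum x (fL j) hk hv]
  by_cases hk0 : k = 0
  · subst hk0
    rw [if_pos rfl]
    unfold fL
    have h1 := bb_rec_real j 0
    have h2 : ((bb j (0 - 1 : ℤ) : ℤ) : ℝ) = -((bb j 0 : ℤ) : ℝ) := by
      rw [show (0 - 1 : ℤ) = -1 by ring, bb_neg_one]; push_cast; ring
    push_cast at h1 h2 ⊢
    linear_combination (-x) * h1 + (-x) * h2
  · rw [if_neg hk0]
    unfold fL
    have h1 := bb_rec_real j (k : ℤ)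
    have e1 : ((k - 1 : ℕ) : ℤ) = (k : ℤ) - 1 := by omega
    have e2 : ((k + 1 : ℕ) : ℤ) = (k : ℤ) + 1 := by push_cast; ring
    rw [e1, e2]
    linear_combination (-x) * h1

end DetAux

namespace Part5

open Finset DetAux

-- row identity: (Lo * U) k j = fA k j   (as range-n sums over ℕ)
lemma lo_sum {n : ℕ} (x : ℝ) (hg : ∀ m ≤ n, gfun m x ≠ 0) {k j : ℕ}
    (hk : k < n) (hj : j < n) :
    ∑ l ∈ range n, fLo x k l * fU x l j = fA x k j := by
  have split : ∀ l, fLo x k l * fU x l j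
      = (if l = k then fU x l j else 0)
        + (if l + 1 = k then (x * gfun l x / gfun (l + 1) x) * fU x l j else 0) := by
    intro l
    unfold fLo
    split_ifs <;> (first | ring1 | (exfalso; omega))
  rw [Finset.sum_congr rfl fun l _ => split l, Finset.sum_add_distrib]
  rw [Finset.sum_ite_eq' (range n) k, if_pos (mem_range.2 hk)]
  by_cases hk0 : k = 0
  · subst hk0
    rw [Finset.sum_eq_zero fun l _ => by rw [if_neg (by omega)], add_zero]
    unfold fU fA
    split_ifs <;>
      (first
        | rfl
        | contradiction
        | (exfalso; omega)
        | (norm_num [gfun_one, gfun_zero]; done)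
        | (exfalso; simp_all; done))
  · obtain ⟨t, rfl⟩ : ∃ t, k = t + 1 := ⟨k - 1, by omega⟩
    have e3 : ∑ l ∈ range n,
          (if l + 1 = t + 1 then (x * gfun l x / gfun (l + 1) x) * fU x l j else 0)
        = (x * gfun t x / gfun (t + 1) x) * fU x t j := by
      rw [Finset.sum_congr rfl (fun l _ => if_congr (by omega : l + 1 = t + 1 ↔ l = t) rfl rfl)]
      rw [Finset.sum_ite_eq' (range n) t, if_pos (mem_range.2 (by omega))]
    rw [e3]
    have hgt : gfun t x ≠ 0 := hg t (by omega)
    have hgt1 : gfun (t + 1) x ≠ 0 := hg (t + 1) (by omega)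
    have hrec : gfun (t + 1 + 1) x = (1 + 2 * x) * gfun (t + 1) x - x ^ 2 * gfun t x :=
      gfun_rec t x
    unfold fU fA
    split_ifs <;>
      (first
        | ring1
        | contradiction
        | (exfalso; omega)
        | (field_simp;
           first
             | done
             | ring1
             | linear_combination hrec
             | linear_combination -hrec
             | linear_combination gfun (t + 1) x * hrec
             | linear_combination -(gfun (t + 1) x) * hrec)
        | (exfalso; simp_all; done))

lemma prod_tel {x : ℝ} : ∀ n : ℕ, (∀ m ≤ n, gfun m x ≠ 0) →
    ∏ k ∈ range n, gfun (k + 1) x / gfun k x = gfun n x := by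
  intro n
  induction n with
  | zero => intro _; simp [gfun_zero]
  | succ m ih =>
    intro hg
    rw [Finset.prod_range_succ, ih (fun p hp => hg p (by omega))]
    rw [mul_comm, div_mul_cancel₀]
    exact hg m (by omega)

end Part5

namespace Assemble

open Finset DetAux Part5 Matrix

variable {n : ℕ} (x : ℝ)

noncomputable def Lmat (n : ℕ) : Matrix (Fin n) (Fin n) ℝ :=
  Matrix.of fun i k : Fin n => fL (i : ℕ) (k : ℕ)

noncomputable def Amat (n : ℕ) (x : ℝ) : Matrix (Fin n) (Fin n) ℝ :=
  Matrix.of fun k l : Fin n => fA x (k : ℕ) (l : ℕ)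

noncomputable def Lomat (n : ℕ) (x : ℝ) : Matrix (Fin n) (Fin n) ℝ :=
  Matrix.of fun k l : Fin n => fLo x (k : ℕ) (l : ℕ)

noncomputable def Umat (n : ℕ) (x : ℝ) : Matrix (Fin n) (Fin n) ℝ :=
  Matrix.of fun k l : Fin n => fU x (k : ℕ) (l : ℕ)

lemma det_Lmat : (Lmat n).det = 1 := by
  rw [Matrix.det_of_lowerTriangular (Lmat n) (fun i j hij => by
    simp only [Lmat, Matrix.of_apply, fL]
    rw [bb_zero (by exact_mod_cast hij)]
    norm_num)]
  rw [Finset.prod_eq_one]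
  intro i _
  simp only [Lmat, Matrix.of_apply, fL]
  rw [show ((i : ℕ) : ℤ) = ((i : ℕ) : ℤ) from rfl, bb_diag]
  norm_num

lemma det_Lomat : (Lomat n x).det = 1 := by
  rw [Matrix.det_of_lowerTriangular (Lomat n x) (fun i j hij => by
    have h : (i : ℕ) < (j : ℕ) := hij
    simp only [Lomat, Matrix.of_apply, fLo]
    rw [if_neg (by omega), if_neg (by omega)])]
  rw [Finset.prod_eq_one]
  intro i _
  simp [Lomat, fLo]

lemma det_Umat (hg : ∀ m ≤ n, gfun m x ≠ 0) : (Umat n x).det = gfun n x := by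
  rw [Matrix.det_of_upperTriangular (M := Umat n x) (fun i j hij => by
    have h : (j : ℕ) < (i : ℕ) := hij
    simp only [Umat, Matrix.of_apply, fU]
    rw [if_neg (by omega), if_neg (by omega)])]
  have : ∀ i : Fin n, Umat n x i i = gfun ((i : ℕ) + 1) x / gfun (i : ℕ) x := by
    intro i; simp [Umat, fU]
  rw [Finset.prod_congr rfl fun i _ => this i]
  rw [Fin.prod_univ_eq_prod_range (fun k => gfun (k + 1) x / gfun k x) n]
  exact prod_tel n hg

lemma AeqLoU (hg : ∀ m ≤ n, gfun m x ≠ 0) : Amat n x = Lomat n x * Umat n x := by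
  ext k j
  rw [Matrix.mul_apply]
  rw [show ∑ l : Fin n, Lomat n x k l * Umat n x l j
      = ∑ l ∈ range n, fLo x (k : ℕ) l * fU x l (j : ℕ) from
    Fin.sum_univ_eq_sum_range (fun l => fLo x (k : ℕ) l * fU x l (j : ℕ)) n]
  rw [lo_sum x hg k.isLt j.isLt]
  rfl

lemma MeqLALt :
    (Matrix.of fun i j : Fin n =>
        (catalan ((i : ℕ) + (j : ℕ)) : ℝ) + x * catalan ((i : ℕ) + (j : ℕ) + 1))
      = Lmat n * (Amat n x * (Lmat n)ᵀ) := by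
  ext i j
  rw [Matrix.mul_apply]
  have inner : ∀ k : Fin n, (Amat n x * (Lmat n)ᵀ) k j
      = fL (j : ℕ) (k : ℕ) + x * fL ((j : ℕ) + 1) (k : ℕ) := by
    intro k
    rw [Matrix.mul_apply]
    rw [show ∑ l : Fin n, Amat n x k l * (Lmat n)ᵀ l j
        = ∑ l ∈ range n, fA x (k : ℕ) l * fL (j : ℕ) l from
      Fin.sum_univ_eq_sum_range (fun l => fA x (k : ℕ) l * fL (j : ℕ) l) n]
    exact rowA x k.isLt j.isLt
  rw [Finset.sum_congr rfl fun k _ => by rw [inner k]]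
  have : ∑ k : Fin n, Lmat n i k * (fL (j : ℕ) (k : ℕ) + x * fL ((j : ℕ) + 1) (k : ℕ))
      = ∑ k ∈ range n, fL (i : ℕ) k * (fL (j : ℕ) k + x * fL ((j : ℕ) + 1) k) :=
    Fin.sum_univ_eq_sum_range (fun k => fL (i : ℕ) k * (fL (j : ℕ) k + x * fL ((j : ℕ) + 1) k)) n
  rw [this]
  have expand : ∀ k, fL (i : ℕ) k * (fL (j : ℕ) k + x * fL ((j : ℕ) + 1) k)
      = fL (i : ℕ) k * fL (j : ℕ) k + x * (fL (i : ℕ) k * fL ((j : ℕ) + 1) k) := by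
    intro k; ring
  rw [Finset.sum_congr rfl fun k _ => expand k, Finset.sum_add_distrib, ← Finset.mul_sum]
  have m1 : ∑ k ∈ range n, fL (i : ℕ) k * fL (j : ℕ) k = (catalan ((i : ℕ) + (j : ℕ)) : ℝ) := by
    unfold fL
    rw [show ∑ k ∈ range n, ((bb (i : ℕ) (k : ℤ) : ℤ) : ℝ) * ((bb (j : ℕ) (k : ℤ) : ℤ) : ℝ)
        = ((∑ k ∈ range n, bb (i : ℕ) (k : ℤ) * bb (j : ℕ) (k : ℤ) : ℤ) : ℝ) from by push_cast; rfl]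
    rw [moments' i.isLt]
    norm_cast
  have m2 : ∑ k ∈ range n, fL (i : ℕ) k * fL ((j : ℕ) + 1) k
      = (catalan ((i : ℕ) + (j : ℕ) + 1) : ℝ) := by
    unfold fL
    rw [show ∑ k ∈ range n, ((bb (i : ℕ) (k : ℤ) : ℤ) : ℝ) * ((bb ((j : ℕ) + 1) (k : ℤ) : ℤ) : ℝ)
        = ((∑ k ∈ range n, bb (i : ℕ) (k : ℤ) * bb ((j : ℕ) + 1) (k : ℤ) : ℤ) : ℝ) from by
      push_cast; rfl]
    rw [moments' i.isLt, show (i : ℕ) + ((j : ℕ) + 1) = (i : ℕ) + (j : ℕ) + 1 from by omega]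
    norm_cast
  rw [m1, m2]
  rfl

theorem main (n : ℕ) (hn : 0 < n) (x : ℝ) (hg : ∀ k ≤ n, gfun k x ≠ 0) :
    Matrix.det (fun i j : Fin n =>
        (catalan ((i : ℕ) + j) : ℝ) + x * catalan ((i : ℕ) + j + 1)) =
      gfun n x := by
  have h1 : Matrix.det (fun i j : Fin n =>
        (catalan ((i : ℕ) + j) : ℝ) + x * catalan ((i : ℕ) + j + 1))
      = Matrix.det (Lmat n * (Amat n x * (Lmat n)ᵀ)) := by
    exact congrArg Matrix.det (MeqLALt x)
  rw [h1, Matrix.det_mul, Matrix.det_mul, Matrix.det_transpose, det_Lmat,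
    AeqLoU x hg, Matrix.det_mul, det_Lomat, det_Umat x hg]
  ring

end Assemble

theorem det_eq_g (n : ℕ) (hn : 0 < n) (x : ℝ) (hg : ∀ k ≤ n, gfun k x ≠ 0) :
    Matrix.det (fun i j : Fin n =>
        (catalan ((i : ℕ) + j) : ℝ) + x * catalan ((i : ℕ) + j + 1)) =
      gfun n x :=
  Assemble.main n hn x hg
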